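/- arXiv:2509.09023 — 5 statements merged into one kernel-verified Lean document; each statement's English description precedes it below -/
import Mathlib

section
/- Let A, B₀ be n×n symmetric positive definite matrices and B₁ an invertible matrix with B₁ + B₁ᵀ − A symmetric positive definite. Define the composite solver B by B⁻¹ = B̄₁⁻¹ + (I − B₁⁻ᵀA) B₀⁻¹ (I − A B₁⁻¹), where B̄₁ = B₁ (B₁ + B₁ᵀ − A)⁻¹ B₁ᵀ. Then B⁻¹ is symmetric positive definite. -/
open Matrix

/-!
`B̄₁⁻¹ = B₁⁻ᵀ (B₁ + B₁ᵀ − A) B₁⁻¹` is a congruence transform of a positive definite matrix, hence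
positive definite, while the coarse correction is the congruence transform
`(1 − A B₁⁻¹)ᵀ B₀⁻¹ (1 − A B₁⁻¹)` of the positive definite `B₀⁻¹`, hence positive semidefinite
(the factor `1 − A B₁⁻¹` may be singular). Their sum is positive definite.
-/

namespace Matrix

variable {n : Type*} [Fintype n] [DecidableEq n]

lemma conjTranspose_one_sub_mul_inv {R : Type*} [CommRing R] [StarRing R] {A B : Matrix n n R}
    (hA : A.IsHermitian) :
    (1 - A * B⁻¹)ᴴ = 1 - (Bᴴ)⁻¹ * A := by
  rw [conjTranspose_sub, conjTranspose_one, conjTranspose_mul, conjTranspose_nonsing_inv, hA.eq]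

lemma PosDef.mul_inv_mul_conjTranspose_inv {K : Type*} [Field K] [PartialOrder K] [StarRing K]
    {X B : Matrix n n K} (hX : X.PosDef) (hB : IsUnit B.det) : (B * X⁻¹ * Bᴴ)⁻¹.PosDef :=
  (hX.inv.mul_mul_conjTranspose_same
    (vecMul_injective_iff_isUnit.2 ((isUnit_iff_isUnit_det B).2 hB))).inv

end Matrix

theorem composite_inverse_posdef {n : ℕ} (A B₀ B₁ : Matrix (Fin n) (Fin n) ℝ)
    (hA : A.PosDef) (hB₀ : B₀.PosDef) (hB₁ : IsUnit B₁.det)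
    (hX : (B₁ + B₁ᵀ - A).PosDef) :
    ((B₁ * (B₁ + B₁ᵀ - A)⁻¹ * B₁ᵀ)⁻¹
      + (1 - (B₁ᵀ)⁻¹ * A) * B₀⁻¹ * (1 - A * B₁⁻¹)).PosDef := by
  have hsmoother : (B₁ * (B₁ + B₁ᵀ - A)⁻¹ * B₁ᵀ)⁻¹.PosDef :=
    hX.mul_inv_mul_conjTranspose_inv hB₁
  have hcorrection : ((1 - (B₁ᵀ)⁻¹ * A) * B₀⁻¹ * (1 - A * B₁⁻¹)).PosSemidef := by
    have h := hB₀.inv.posSemidef.conjTranspose_mul_mul_same (1 - A * B₁⁻¹)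
    rwa [conjTranspose_one_sub_mul_inv hA.isHermitian] at h
  exact hsmoother.add_posSemidef hcorrection
end

section
/- With A s.p.d., B₀ s.p.d., and B₁ invertible with B₁ + B₁ᵀ − A s.p.d., the composite solver B defined by B⁻¹ = B̄₁⁻¹ + (I − B₁⁻ᵀA) B₀⁻¹ (I − A B₁⁻¹) satisfies vᵀ B⁻¹ v ≥ vᵀ B̄₁⁻¹ v for all v, and consequently vᵀ B v ≤ vᵀ B̄₁ v for all v, so that the operator norm satisfies ‖B‖ ≤ ‖B̄₁‖. -/
/-
The correction term of the composite solver is `Cᵀ B₀⁻¹ C` with `C = I - A B₁⁻¹` (here `A` is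
symmetric), so `B⁻¹ = B̄₁⁻¹ + Cᵀ B₀⁻¹ C ≽ B̄₁⁻¹`. Inversion reverses the Loewner order on positive
definite matrices, giving `B ≼ B̄₁`, and the spectral norm of a positive semidefinite matrix is the
supremum of its Rayleigh quotient, which is monotone in the Loewner order.
-/

open Matrix

noncomputable def spec {n : ℕ} (M : Matrix (Fin n) (Fin n) ℝ) : ℝ :=
  ‖Matrix.toEuclideanCLM (𝕜 := ℝ) M‖

section

variable {n : Type*} [Fintype n] [DecidableEq n]

theorem Matrix.PosDef.dotProduct_inv_mulVec_le {P Q : Matrix n n ℝ} (hP : P.PosDef)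
    (hQ : IsUnit Q.det) (hPQ : ∀ v, v ⬝ᵥ (P *ᵥ v) ≤ v ⬝ᵥ (Q *ᵥ v)) (v : n → ℝ) :
    v ⬝ᵥ (Q⁻¹ *ᵥ v) ≤ v ⬝ᵥ (P⁻¹ *ᵥ v) := by
  set w := Q⁻¹ *ᵥ v
  have hQw : Q *ᵥ w = v := by rw [mulVec_mulVec, mul_nonsing_inv _ hQ, one_mulVec]
  have hPw : w ⬝ᵥ (P *ᵥ w) ≤ w ⬝ᵥ v := hQw ▸ hPQ w
  have hPPw : P⁻¹ *ᵥ (P *ᵥ w) = w := by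
    rw [mulVec_mulVec, nonsing_inv_mul _ (P.isUnit_iff_isUnit_det.mp hP.isUnit), one_mulVec]
  have hcross : (P *ᵥ w) ⬝ᵥ (P⁻¹ *ᵥ v) = w ⬝ᵥ v := by
    rw [dotProduct_mulVec, ← mulVec_transpose, ← conjTranspose_eq_transpose_of_trivial,
      hP.inv.isHermitian.eq, hPPw]
  -- `0 ≤ (Pw - v)ᵀ P⁻¹ (Pw - v) = wᵀPw - 2 wᵀv + vᵀP⁻¹v` and `wᵀPw ≤ wᵀQw = wᵀv = vᵀQ⁻¹v`.
  have hsq : 0 ≤ (P *ᵥ w - v) ⬝ᵥ (P⁻¹ *ᵥ (P *ᵥ w - v)) := by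
    simpa using hP.inv.posSemidef.dotProduct_mulVec_nonneg (P *ᵥ w - v)
  rw [mulVec_sub, hPPw, dotProduct_sub, sub_dotProduct, sub_dotProduct, hcross,
    dotProduct_comm (P *ᵥ w)] at hsq
  linarith [dotProduct_comm v w]

theorem Matrix.rayleighQuotient_toEuclideanCLM (M : Matrix n n ℝ) (x : EuclideanSpace ℝ n) :
    (toEuclideanCLM (𝕜 := ℝ) M).rayleighQuotient x = x.ofLp ⬝ᵥ (M *ᵥ x.ofLp) / ‖x‖ ^ 2 := by
  simp [ContinuousLinearMap.rayleighQuotient, ContinuousLinearMap.reApplyInnerSelf,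
    real_inner_comm, inner_toEuclideanCLM]

theorem Matrix.norm_toEuclideanCLM_le_of_dotProduct_mulVec_le {M N : Matrix n n ℝ}
    (hM : M.PosSemidef) (hMN : ∀ v, v ⬝ᵥ (M *ᵥ v) ≤ v ⬝ᵥ (N *ᵥ v)) :
    ‖toEuclideanCLM (𝕜 := ℝ) M‖ ≤ ‖toEuclideanCLM (𝕜 := ℝ) N‖ := by
  have hsymm : (toEuclideanCLM (𝕜 := ℝ) M : EuclideanSpace ℝ n →ₗ[ℝ] _).IsSymmetric :=
    isSymmetric_toEuclideanLin_iff.mpr hM.isHermitian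
  rw [ContinuousLinearMap.norm_eq_iSup_rayleighQuotient _ hsymm]
  refine ciSup_le fun x => ?_
  have hnonneg : 0 ≤ x.ofLp ⬝ᵥ (M *ᵥ x.ofLp) := by
    simpa using hM.dotProduct_mulVec_nonneg x.ofLp
  calc |(toEuclideanCLM (𝕜 := ℝ) M).rayleighQuotient x|
      = x.ofLp ⬝ᵥ (M *ᵥ x.ofLp) / ‖x‖ ^ 2 := by
        rw [rayleighQuotient_toEuclideanCLM, abs_of_nonneg (div_nonneg hnonneg (sq_nonneg _))]
    _ ≤ (toEuclideanCLM (𝕜 := ℝ) N).rayleighQuotient x := by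
        rw [rayleighQuotient_toEuclideanCLM]
        exact div_le_div_of_nonneg_right (hMN x.ofLp) (sq_nonneg _)
    _ ≤ ‖toEuclideanCLM (𝕜 := ℝ) N‖ :=
        (le_abs_self _).trans (ContinuousLinearMap.rayleighQuotient_le_norm _ x)

end

theorem composite_norm_le_symmetrized {n : ℕ} (A B₀ B₁ : Matrix (Fin n) (Fin n) ℝ)
    (hA : A.PosDef) (hB₀ : B₀.PosDef) (hB₁ : IsUnit B₁.det)
    (hX : (B₁ + B₁ᵀ - A).PosDef)
    (Bbar : Matrix (Fin n) (Fin n) ℝ) (hBbar : Bbar = B₁ * (B₁ + B₁ᵀ - A)⁻¹ * B₁ᵀ)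
    (Binv : Matrix (Fin n) (Fin n) ℝ)
    (hBinv : Binv = Bbar⁻¹ + (1 - (B₁ᵀ)⁻¹ * A) * B₀⁻¹ * (1 - A * B₁⁻¹))
    (B : Matrix (Fin n) (Fin n) ℝ) (hB : B = Binv⁻¹) :
    (∀ v : Fin n → ℝ, v ⬝ᵥ (Bbar⁻¹ *ᵥ v) ≤ v ⬝ᵥ (Binv *ᵥ v)) ∧
    (∀ v : Fin n → ℝ, v ⬝ᵥ (B *ᵥ v) ≤ v ⬝ᵥ (Bbar *ᵥ v)) ∧
    spec B ≤ spec Bbar := by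
  have hBbarPD : Bbar.PosDef := by
    rw [hBbar, ← conjTranspose_eq_transpose_of_trivial B₁]
    exact hX.inv.mul_mul_conjTranspose_same
      (vecMul_injective_iff_isUnit.mpr ((isUnit_iff_isUnit_det _).mpr hB₁))
  have hcorrection : ((1 - (B₁ᵀ)⁻¹ * A) * B₀⁻¹ * (1 - A * B₁⁻¹)).PosSemidef := by
    have htranspose : 1 - (B₁ᵀ)⁻¹ * A = (1 - A * B₁⁻¹)ᴴ := by
      rw [conjTranspose_eq_transpose_of_trivial, transpose_sub, transpose_one, transpose_mul,
        transpose_nonsing_inv, ← conjTranspose_eq_transpose_of_trivial A, hA.isHermitian.eq]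
    rw [htranspose]
    exact hB₀.inv.posSemidef.conjTranspose_mul_mul_same _
  have hBinvPD : Binv.PosDef := hBinv ▸ hBbarPD.inv.add_posSemidef hcorrection
  have hinv_le : ∀ v : Fin n → ℝ, v ⬝ᵥ (Bbar⁻¹ *ᵥ v) ≤ v ⬝ᵥ (Binv *ᵥ v) := fun v => by
    rw [hBinv, add_mulVec, dotProduct_add]
    simpa using hcorrection.dotProduct_mulVec_nonneg v
  have hle : ∀ v : Fin n → ℝ, v ⬝ᵥ (B *ᵥ v) ≤ v ⬝ᵥ (Bbar *ᵥ v) := fun v => by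
    simpa [hB, nonsing_inv_nonsing_inv _ (Bbar.isUnit_iff_isUnit_det.mp hBbarPD.isUnit)] using
      hBbarPD.inv.dotProduct_inv_mulVec_le
        (Binv.isUnit_iff_isUnit_det.mp hBinvPD.isUnit) hinv_le v
  exact ⟨hinv_le, hle,
    norm_toEuclideanCLM_le_of_dotProduct_mulVec_le (hB ▸ hBinvPD.inv.posSemidef) hle⟩
end

section
/- Let A and B be n×n symmetric positive definite matrices with vᵀAv ≤ vᵀBv for all v and ‖B‖ ≤ c₀‖A‖ for some constant c₀ ≥ 1 (spectral norms). Suppose w is a vector satisfying ‖(I − B⁻¹A)w‖²_A ≥ (1 − δ)‖w‖²_A for some δ ∈ (0,1). Then ‖Aw‖² ≤ c₀ ‖A‖ δ ‖w‖²_A. -/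
/-! Write `r = A w` for the residual and `u = B⁻¹ r`, so that one step maps the error `w` to
`w - u`. Expanding `‖w - u‖²_A` and bounding `uᵀAu ≤ uᵀBu = uᵀr` gives
`‖w - u‖²_A ≤ ‖w‖²_A - rᵀB⁻¹r`; hence stalling forces `rᵀB⁻¹r ≤ δ ‖w‖²_A`. Cauchy–Schwarz for
the inner product `xᵀBy` gives `(rᵀr)² = (uᵀBr)² ≤ (uᵀBu)(rᵀBr) ≤ (rᵀB⁻¹r) ‖B‖ rᵀr`, i.e.
`‖r‖² ≤ ‖B‖ rᵀB⁻¹r`, and `‖B‖ ≤ c₀ ‖A‖` finishes. -/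

open Matrix

namespace Matrix

variable {ι : Type*} [Fintype ι]

lemma IsSymm.dotProduct_mulVec_comm {R : Type*} [CommSemiring R] {M : Matrix ι ι R}
    (hM : M.IsSymm) (x y : ι → R) :
    x ⬝ᵥ (M *ᵥ y) = y ⬝ᵥ (M *ᵥ x) := by
  rw [← dotProduct_transpose_mulVec, hM.eq]

lemma PosSemidef.dotProduct_mulVec_sq_le {M : Matrix ι ι ℝ} (hM : M.PosSemidef) (x y : ι → ℝ) :
    (x ⬝ᵥ (M *ᵥ y)) ^ 2 ≤ (x ⬝ᵥ (M *ᵥ x)) * (y ⬝ᵥ (M *ᵥ y)) := by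
  classical
  have hsymm : M.IsSymm := isHermitian_iff_isSymm.mp hM.isHermitian
  simpa only [toLinearMap₂'_apply'] using
    LinearMap.BilinForm.apply_sq_le_of_symm (toLinearMap₂' ℝ M)
      (fun x ↦ by
        simpa only [toLinearMap₂'_apply', star_trivial] using hM.dotProduct_mulVec_nonneg x)
      ⟨fun x y ↦ by
        simpa only [toLinearMap₂'_apply', RingHom.id_apply] using hsymm.dotProduct_mulVec_comm x y⟩
      x y

lemma mulVec_nonsing_inv_mulVec {R : Type*} [CommRing R] [DecidableEq ι] {B : Matrix ι ι R}
    (hB : IsUnit B) (v : ι → R) :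
    B *ᵥ (B⁻¹ *ᵥ v) = v := by
  rw [mulVec_mulVec, mul_nonsing_inv _ ((isUnit_iff_isUnit_det B).mp hB), one_mulVec]

lemma dotProduct_mulVec_one_sub_inv_mul_mulVec_le [DecidableEq ι] {A B : Matrix ι ι ℝ}
    (hA : A.IsSymm) (hB : IsUnit B) (hAB : ∀ v, v ⬝ᵥ (A *ᵥ v) ≤ v ⬝ᵥ (B *ᵥ v)) (w : ι → ℝ) :
    ((1 - B⁻¹ * A) *ᵥ w) ⬝ᵥ (A *ᵥ ((1 - B⁻¹ * A) *ᵥ w)) ≤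
      w ⬝ᵥ (A *ᵥ w) - (A *ᵥ w) ⬝ᵥ (B⁻¹ *ᵥ (A *ᵥ w)) := by
  set u := B⁻¹ *ᵥ (A *ᵥ w)
  have hAu : u ⬝ᵥ (A *ᵥ u) ≤ u ⬝ᵥ (A *ᵥ w) := by
    simpa only [u, mulVec_nonsing_inv_mulVec hB] using hAB u
  rw [sub_mulVec, one_mulVec, ← mulVec_mulVec, mulVec_sub, sub_dotProduct, dotProduct_sub,
    dotProduct_sub, hA.dotProduct_mulVec_comm w u, dotProduct_comm (A *ᵥ w) u]
  linarith

end Matrix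

lemma dotProduct_mulVec_le_spec_mul {n : ℕ} (M : Matrix (Fin n) (Fin n) ℝ) (x : Fin n → ℝ) :
    x ⬝ᵥ (M *ᵥ x) ≤ spec M * (x ⬝ᵥ x) := by
  set T := toEuclideanCLM (n := Fin n) (𝕜 := ℝ) M
  set x' : EuclideanSpace ℝ (Fin n) := WithLp.toLp 2 x
  have hx : x ⬝ᵥ x = ‖x'‖ * ‖x'‖ := by
    rw [← real_inner_self_eq_norm_mul_norm]
    simpa [T] using (inner_toEuclideanCLM (1 : Matrix (Fin n) (Fin n) ℝ) x' x').symm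
  calc x ⬝ᵥ (M *ᵥ x) = inner ℝ x' (T x') := (inner_toEuclideanCLM M x' x').symm
    _ ≤ ‖x'‖ * ‖T x'‖ := real_inner_le_norm _ _
    _ ≤ ‖x'‖ * (‖T‖ * ‖x'‖) := by gcongr; exact T.le_opNorm x'
    _ = spec M * (x ⬝ᵥ x) := by rw [spec, hx]; ring

lemma Matrix.PosDef.dotProduct_self_le_spec_mul_dotProduct_inv_mulVec {n : ℕ}
    {B : Matrix (Fin n) (Fin n) ℝ} (hB : B.PosDef) (v : Fin n → ℝ) :
    v ⬝ᵥ v ≤ spec B * (v ⬝ᵥ (B⁻¹ *ᵥ v)) := by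
  set u := B⁻¹ *ᵥ v
  have hBu : B *ᵥ u = v := mulVec_nonsing_inv_mulVec hB.isUnit v
  have hu : 0 ≤ v ⬝ᵥ u := by
    simpa only [star_trivial] using hB.inv.posSemidef.dotProduct_mulVec_nonneg v
  have hcs : (v ⬝ᵥ v) * (v ⬝ᵥ v) ≤ (spec B * (v ⬝ᵥ u)) * (v ⬝ᵥ v) := by
    have hsymm : B.IsSymm := isHermitian_iff_isSymm.mp hB.isHermitian
    have h := hB.posSemidef.dotProduct_mulVec_sq_le u v
    rw [hsymm.dotProduct_mulVec_comm u v, hBu, dotProduct_comm u v] at h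
    calc (v ⬝ᵥ v) * (v ⬝ᵥ v) ≤ (v ⬝ᵥ u) * (v ⬝ᵥ (B *ᵥ v)) := by rw [← sq]; exact h
      _ ≤ (v ⬝ᵥ u) * (spec B * (v ⬝ᵥ v)) := by gcongr; exact dotProduct_mulVec_le_spec_mul B v
      _ = (spec B * (v ⬝ᵥ u)) * (v ⬝ᵥ v) := by ring
  have hv : 0 ≤ v ⬝ᵥ v := by simpa only [star_trivial] using dotProduct_star_self_nonneg v
  rcases hv.eq_or_lt with hv | hv
  · rw [← hv]; exact mul_nonneg (norm_nonneg _) hu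
  · exact le_of_mul_le_mul_right hcs hv

theorem near_null_characterization_general {n : ℕ} (A B : Matrix (Fin n) (Fin n) ℝ)
    (hA : A.PosDef) (hB : B.PosDef)
    (hAB : ∀ v : Fin n → ℝ, v ⬝ᵥ (A *ᵥ v) ≤ v ⬝ᵥ (B *ᵥ v))
    (c₀ : ℝ) (hnorm : spec B ≤ c₀ * spec A)
    (δ : ℝ)
    (w : Fin n → ℝ)
    (hstall : (1 - δ) * (w ⬝ᵥ (A *ᵥ w)) ≤
      ((1 - B⁻¹ * A) *ᵥ w) ⬝ᵥ (A *ᵥ ((1 - B⁻¹ * A) *ᵥ w))) :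
    (A *ᵥ w) ⬝ᵥ (A *ᵥ w) ≤ c₀ * spec A * δ * (w ⬝ᵥ (A *ᵥ w)) := by
  set r := (A *ᵥ w) ⬝ᵥ (B⁻¹ *ᵥ (A *ᵥ w))
  have hr_nonneg : 0 ≤ r := by
    simpa only [star_trivial] using hB.inv.posSemidef.dotProduct_mulVec_nonneg (A *ᵥ w)
  have hr_le : r ≤ δ * (w ⬝ᵥ (A *ᵥ w)) := by
    linarith [dotProduct_mulVec_one_sub_inv_mul_mulVec_le
      (isHermitian_iff_isSymm.mp hA.isHermitian) hB.isUnit hAB w]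
  calc (A *ᵥ w) ⬝ᵥ (A *ᵥ w) ≤ spec B * r :=
        hB.dotProduct_self_le_spec_mul_dotProduct_inv_mulVec (A *ᵥ w)
    _ ≤ (c₀ * spec A) * (δ * (w ⬝ᵥ (A *ᵥ w))) :=
        mul_le_mul hnorm hr_le hr_nonneg ((norm_nonneg _).trans hnorm)
    _ = c₀ * spec A * δ * (w ⬝ᵥ (A *ᵥ w)) := by ring

theorem near_null_characterization {n : ℕ} (A B : Matrix (Fin n) (Fin n) ℝ)
    (hA : A.PosDef) (hB : B.PosDef)
    (hAB : ∀ v : Fin n → ℝ, v ⬝ᵥ (A *ᵥ v) ≤ v ⬝ᵥ (B *ᵥ v))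
    (c₀ : ℝ) (hc₀ : 1 ≤ c₀) (hnorm : spec B ≤ c₀ * spec A)
    (δ : ℝ) (hδ : δ ∈ Set.Ioo (0 : ℝ) 1)
    (w : Fin n → ℝ)
    (hstall : (1 - δ) * (w ⬝ᵥ (A *ᵥ w)) ≤
      ((1 - B⁻¹ * A) *ᵥ w) ⬝ᵥ (A *ᵥ ((1 - B⁻¹ * A) *ᵥ w))) :
    (A *ᵥ w) ⬝ᵥ (A *ᵥ w) ≤ c₀ * spec A * δ * (w ⬝ᵥ (A *ᵥ w)) :=
  near_null_characterization_general A B hA hB hAB c₀ hnorm δ w hstall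
end

section
/- Let A, B₀, B₁ be n×n symmetric positive definite matrices with A ≼ B₀ and A ≼ B₁ (Loewner order). Then the composite solver B defined by I − B⁻¹A = (I − B₁⁻¹A)(I − B₀⁻¹A)(I − B₁⁻¹A) satisfies A ≼ B, and moreover ‖B‖ ≤ ‖B₁‖. -/
/-!
Write `W = 1 - B₁⁻¹A`, so that `Wᴴ = 1 - AB₁⁻¹`. Multiplying the defining relation on the right
by `A⁻¹` gives `A⁻¹ - B⁻¹ = W (A⁻¹ - B₀⁻¹) Wᴴ`, and rearranging that gives
`B⁻¹ - B₁⁻¹ = B₁⁻¹ (B₁ - A) B₁⁻¹ + W B₀⁻¹ Wᴴ`. Both right-hand sides are congruences of positive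
elements, because inversion reverses the order on positive units; so `B₁⁻¹ ≤ B⁻¹ ≤ A⁻¹`, and
inverting once more yields `A ≤ B ≤ B₁`; all of this holds in any star-ordered ring. The operator
norm is monotone on positive operators, since for those it is the supremum of the Rayleigh quotient.
-/

open Matrix

open scoped MatrixOrder ComplexOrder

namespace Units

section Ring

variable {R : Type*} [Ring R]

lemma inv_sub_inv_eq_of_one_sub_inv_mul_eq {a b : Rˣ} {c d : R}
    (h : 1 - ↑b⁻¹ * a = (1 - c * a) * (1 - d * a) * (1 - c * a)) :
    ↑a⁻¹ - ↑b⁻¹ = (1 - c * a) * (↑a⁻¹ - d) * (1 - a * c) := by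
  have hc : (1 - c * a) * ↑a⁻¹ = ↑a⁻¹ * (1 - a * c) := by
    simp only [sub_mul, mul_sub, one_mul, mul_one, mul_assoc, mul_inv, inv_mul_cancel_left]
  have hd : (1 - d * a) * ↑a⁻¹ = ↑a⁻¹ - d := by
    simp only [sub_mul, one_mul, mul_assoc, mul_inv, mul_one]
  calc (↑a⁻¹ - ↑b⁻¹ : R) = (1 - ↑b⁻¹ * a) * ↑a⁻¹ := by
        simp only [sub_mul, one_mul, mul_assoc, mul_inv, mul_one]
    _ = (1 - c * a) * ((1 - d * a) * ↑a⁻¹) * (1 - a * c) := by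
        rw [h, mul_assoc, hc]; simp only [mul_assoc]
    _ = _ := by rw [hd]

lemma inv_sub_inv_eq_of_one_sub_inv_mul_eq' {a b b₁ : Rˣ} {d : R}
    (h : 1 - ↑b⁻¹ * a = (1 - ↑b₁⁻¹ * a) * (1 - d * a) * (1 - ↑b₁⁻¹ * a)) :
    ↑b⁻¹ - ↑b₁⁻¹ = ↑b₁⁻¹ * (↑b₁ - ↑a) * ↑b₁⁻¹ + (1 - ↑b₁⁻¹ * a) * d * (1 - a * ↑b₁⁻¹) := by
  rw [← sub_sub_cancel (↑a⁻¹ : R) ↑b⁻¹, inv_sub_inv_eq_of_one_sub_inv_mul_eq h]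
  simp only [sub_mul, mul_sub, one_mul, mul_one, mul_assoc, mul_inv, inv_mul_cancel_left, inv_mul]
  abel

end Ring

lemma isSelfAdjoint_coe_inv {R : Type*} [Monoid R] [StarMul R] {a : Rˣ}
    (ha : IsSelfAdjoint (a : R)) : IsSelfAdjoint (↑a⁻¹ : R) := by
  have hstar : star a = a := Units.ext ha.star_eq
  rw [IsSelfAdjoint, ← coe_star_inv, hstar]

section StarOrderedRing

variable {R : Type*} [Ring R] [PartialOrder R] [StarRing R] [StarOrderedRing R]

lemma inv_nonneg_of_nonneg {a : Rˣ} (ha : 0 ≤ (a : R)) : 0 ≤ (↑a⁻¹ : R) := by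
  have h : (↑a⁻¹ : R) = star ↑a⁻¹ * a * ↑a⁻¹ := by
    rw [(isSelfAdjoint_coe_inv (.of_nonneg ha)).star_eq, mul_inv_cancel_right]
  rw [h]
  exact star_left_conjugate_nonneg ha _

lemma inv_le_inv_of_le {a b : Rˣ} (ha : 0 ≤ (a : R)) (hab : (a : R) ≤ b) :
    (↑b⁻¹ : R) ≤ ↑a⁻¹ := by
  have hsa := isSelfAdjoint_coe_inv (.of_nonneg ha)
  have hsb := isSelfAdjoint_coe_inv (.of_nonneg (ha.trans hab))
  have h : (↑a⁻¹ - ↑b⁻¹ : R)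
      = star (↑a⁻¹ - ↑b⁻¹ : R) * a * (↑a⁻¹ - ↑b⁻¹) + star (↑b⁻¹ : R) * (b - a) * ↑b⁻¹ := by
    rw [star_sub, hsa.star_eq, hsb.star_eq]
    simp only [sub_mul, mul_sub, inv_mul, mul_inv, one_mul, mul_one, mul_assoc]
    abel
  rw [← sub_nonneg, h]
  exact add_nonneg (star_left_conjugate_nonneg ha _)
    (star_left_conjugate_nonneg (sub_nonneg.2 hab) _)

theorem mem_Icc_of_one_sub_inv_mul_eq {a b₀ b₁ b : Rˣ} (ha : 0 ≤ (a : R))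
    (h₀ : (a : R) ≤ b₀) (h₁ : (a : R) ≤ b₁)
    (hcomp : (1 - ↑b⁻¹ * a : R) = (1 - ↑b₁⁻¹ * a) * (1 - ↑b₀⁻¹ * a) * (1 - ↑b₁⁻¹ * a)) :
    (b : R) ∈ Set.Icc (a : R) b₁ := by
  have hb₁ : 0 ≤ (b₁ : R) := ha.trans h₁
  have hc : IsSelfAdjoint (↑b₁⁻¹ : R) := isSelfAdjoint_coe_inv (.of_nonneg hb₁)
  have hc₀ : 0 ≤ (↑b₁⁻¹ : R) := inv_nonneg_of_nonneg hb₁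
  have hW : star (1 - ↑b₁⁻¹ * a : R) = 1 - a * ↑b₁⁻¹ := by
    rw [star_sub, star_one, star_mul, (IsSelfAdjoint.of_nonneg ha).star_eq, hc.star_eq]
  have hb₁b : (↑b₁⁻¹ : R) ≤ ↑b⁻¹ := by
    rw [← sub_nonneg, inv_sub_inv_eq_of_one_sub_inv_mul_eq' hcomp, ← hW]
    nth_rw 2 [← hc.star_eq]
    exact add_nonneg (star_right_conjugate_nonneg (sub_nonneg.2 h₁) _)
      (star_right_conjugate_nonneg (inv_nonneg_of_nonneg (ha.trans h₀)) _)
  have hba : (↑b⁻¹ : R) ≤ ↑a⁻¹ := by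
    rw [← sub_nonneg, inv_sub_inv_eq_of_one_sub_inv_mul_eq hcomp, ← hW]
    exact star_right_conjugate_nonneg (sub_nonneg.2 (inv_le_inv_of_le ha h₀)) _
  exact ⟨by simpa using inv_le_inv_of_le (hc₀.trans hb₁b) hba,
    by simpa using inv_le_inv_of_le hc₀ hb₁b⟩

end StarOrderedRing

end Units

namespace ContinuousLinearMap

variable {𝕜 E : Type*} [RCLike 𝕜] [NormedAddCommGroup E] [InnerProductSpace 𝕜 E]

lemma IsPositive.norm_le_norm_of_le {T S : E →L[𝕜] E} (hT : T.IsPositive) (hTS : T ≤ S) :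
    ‖T‖ ≤ ‖S‖ := by
  rw [T.norm_eq_iSup_rayleighQuotient hT.isSymmetric]
  refine ciSup_le fun x => ?_
  have hle : T.rayleighQuotient x ≤ S.rayleighQuotient x := by
    have := ((le_def T S).1 hTS).re_inner_nonneg_left x
    simp only [_root_.sub_apply, inner_sub_left, map_sub, sub_nonneg] at this
    exact div_le_div_of_nonneg_right this (sq_nonneg _)
  have hnonneg : 0 ≤ T.rayleighQuotient x :=
    div_nonneg (hT.re_inner_nonneg_left x) (sq_nonneg _)
  rw [abs_of_nonneg hnonneg]
  exact hle.trans ((le_abs_self _).trans (S.rayleighQuotient_le_norm x))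

end ContinuousLinearMap

namespace Matrix

variable {𝕜 n : Type*} [RCLike 𝕜] [Fintype n] [DecidableEq n]

lemma PosSemidef.isPositive_toEuclideanCLM {M : Matrix n n 𝕜} (hM : M.PosSemidef) :
    (toEuclideanCLM (𝕜 := 𝕜) M).IsPositive := by
  rw [← ContinuousLinearMap.isPositive_toLinearMap_iff, coe_toEuclideanCLM_eq_toEuclideanLin]
  exact isPositive_toEuclideanLin_iff.2 hM

lemma norm_toEuclideanCLM_le_of_le {P Q : Matrix n n 𝕜} (hP : 0 ≤ P) (hPQ : P ≤ Q) :
    ‖toEuclideanCLM (𝕜 := 𝕜) P‖ ≤ ‖toEuclideanCLM (𝕜 := 𝕜) Q‖ := by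
  refine hP.posSemidef.isPositive_toEuclideanCLM.norm_le_norm_of_le ?_
  rw [ContinuousLinearMap.le_def, ← map_sub]
  exact PosSemidef.isPositive_toEuclideanCLM hPQ

end Matrix

theorem composite_dominates_A_and_norm_bound {n : ℕ}
    (A B₀ B₁ B : Matrix (Fin n) (Fin n) ℝ)
    (hA : A.PosDef) (hB₀ : B₀.PosDef) (hB₁ : B₁.PosDef)
    (h₀ : (B₀ - A).PosSemidef) (h₁ : (B₁ - A).PosSemidef)
    (hBdet : IsUnit B.det)
    (hcomp : 1 - B⁻¹ * A = (1 - B₁⁻¹ * A) * (1 - B₀⁻¹ * A) * (1 - B₁⁻¹ * A)) :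
    (B - A).PosSemidef ∧ spec B ≤ spec B₁ := by
  have hB : IsUnit B := (isUnit_iff_isUnit_det B).2 hBdet
  obtain ⟨hAB, hBB₁⟩ := Units.mem_Icc_of_one_sub_inv_mul_eq
    (a := hA.isUnit.unit) (b₀ := hB₀.isUnit.unit) (b₁ := hB₁.isUnit.unit) (b := hB.unit)
    hA.posSemidef.nonneg h₀ h₁ (by simpa [coe_units_inv] using hcomp)
  exact ⟨hAB, norm_toEuclideanCLM_le_of_le (hA.posSemidef.nonneg.trans hAB) hBB₁⟩
end

section
/- Let B₁ be an n×n symmetric positive definite matrix and A s.p.d. with B₁ ≽ A. Then 2B₁ − A is symmetric positive definite and satisfies ‖(2B₁ − A)⁻¹‖ ≤ ‖B₁⁻¹‖, and the symmetrized solver B̄₁ = B₁(2B₁ − A)⁻¹B₁ satisfies A ≼ B̄₁ ≼ B₁; in particular ‖B̄₁‖ ≤ ‖B₁‖. -/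
open Matrix

/-!
Write `D = B₁ - A ≽ 0`, `C = 2B₁ - A = B₁ + D ≻ 0` and `B̄₁ = B₁ C⁻¹ B₁`. Each order relation is a
congruence of a positive semidefinite matrix:
`B₁⁻¹ - C⁻¹ = C⁻¹ (D + D B₁⁻¹ D) C⁻¹`, `B₁ - B̄₁ = B₁ (B₁⁻¹ - C⁻¹) B₁` and `B̄₁ - A = D C⁻¹ D`.
The norm bounds hold because the operator norm of a positive operator is the supremum of its
Rayleigh quotient, which is monotone in the Loewner order.
-/

namespace ContinuousLinearMap

variable {𝕜 E : Type*} [RCLike 𝕜] [NormedAddCommGroup E] [InnerProductSpace 𝕜 E]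

theorem norm_le_norm_of_nonneg_of_le {T S : E →L[𝕜] E} (hT : 0 ≤ T) (hTS : T ≤ S) :
    ‖T‖ ≤ ‖S‖ := by
  rw [nonneg_iff_isPositive] at hT
  rw [T.norm_eq_iSup_rayleighQuotient hT.isSymmetric]
  refine ciSup_le fun x ↦ le_trans ?_ (S.rayleighQuotient_le_norm x)
  have hle : T.reApplyInnerSelf x ≤ S.reApplyInnerSelf x := by
    simpa [reApplyInnerSelf_apply, inner_sub_left] using hTS.re_inner_nonneg_left x
  have hT_nonneg : 0 ≤ T.rayleighQuotient x :=
    div_nonneg (hT.re_inner_nonneg_left x) (by positivity)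
  rw [abs_of_nonneg hT_nonneg]
  exact (div_le_div_of_nonneg_right hle (by positivity)).trans (le_abs_self _)

end ContinuousLinearMap

namespace Matrix

section CommRing

variable {n α : Type*} [Fintype n] [DecidableEq n] [CommRing α]

theorem inv_sub_inv_add_eq {B D : Matrix n n α} (hB : IsUnit B.det) (hBD : IsUnit (B + D).det) :
    B⁻¹ - (B + D)⁻¹ = (B + D)⁻¹ * (D + D * B⁻¹ * D) * (B + D)⁻¹ := by
  obtain ⟨C, rfl⟩ : ∃ C, D = C - B := ⟨B + D, by abel⟩
  rw [add_sub_cancel] at hBD ⊢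
  simp only [mul_add, add_mul, mul_sub, sub_mul, Matrix.mul_assoc, mul_nonsing_inv (h := hB),
    nonsing_inv_mul (h := hB), mul_nonsing_inv (h := hBD), nonsing_inv_mul (h := hBD),
    nonsing_inv_mul_cancel_left (h := hBD), Matrix.mul_one, Matrix.one_mul]
  abel

theorem mul_inv_add_mul_sub_sub_eq {B D : Matrix n n α} (hBD : IsUnit (B + D).det) :
    B * (B + D)⁻¹ * B - (B - D) = D * (B + D)⁻¹ * D := by
  obtain ⟨C, rfl⟩ : ∃ C, D = C - B := ⟨B + D, by abel⟩
  rw [add_sub_cancel] at hBD ⊢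
  simp only [mul_sub, sub_mul, Matrix.mul_assoc, mul_nonsing_inv (h := hBD),
    nonsing_inv_mul (h := hBD), Matrix.mul_one, Matrix.one_mul]
  abel

theorem sub_mul_inv_mul_eq {B C : Matrix n n α} (hB : IsUnit B.det) :
    B - B * C⁻¹ * B = B * (B⁻¹ - C⁻¹) * B := by
  rw [mul_sub, sub_mul, mul_nonsing_inv (h := hB), Matrix.one_mul]

end CommRing

open scoped ComplexOrder

variable {n 𝕜 : Type*} [Fintype n] [RCLike 𝕜]

theorem PosSemidef.mul_mul_of_isHermitian {M X : Matrix n n 𝕜} (hM : M.PosSemidef)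
    (hX : X.IsHermitian) : (X * M * X).PosSemidef := by
  simpa only [hX.eq] using hM.conjTranspose_mul_mul_same X

variable [DecidableEq n]

namespace PosDef

variable {B D : Matrix n n 𝕜}

theorem posSemidef_inv_sub_inv_add (hB : B.PosDef) (hD : D.PosSemidef) :
    (B⁻¹ - (B + D)⁻¹).PosSemidef := by
  have hBD := hB.add_posSemidef hD
  rw [inv_sub_inv_add_eq hB.det_pos.ne'.isUnit hBD.det_pos.ne'.isUnit]
  exact (hD.add (hB.inv.posSemidef.mul_mul_of_isHermitian hD.isHermitian)).mul_mul_of_isHermitian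
    hBD.inv.isHermitian

theorem posSemidef_sub_mul_inv_add_mul (hB : B.PosDef) (hD : D.PosSemidef) :
    (B - B * (B + D)⁻¹ * B).PosSemidef := by
  rw [sub_mul_inv_mul_eq hB.det_pos.ne'.isUnit]
  exact (hB.posSemidef_inv_sub_inv_add hD).mul_mul_of_isHermitian hB.isHermitian

theorem posSemidef_mul_inv_add_mul_sub_sub (hB : B.PosDef) (hD : D.PosSemidef) :
    (B * (B + D)⁻¹ * B - (B - D)).PosSemidef := by
  have hBD := hB.add_posSemidef hD
  rw [mul_inv_add_mul_sub_sub_eq hBD.det_pos.ne'.isUnit]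
  exact hBD.inv.posSemidef.mul_mul_of_isHermitian hD.isHermitian

end PosDef

theorem PosSemidef.toEuclideanCLM_nonneg {M : Matrix n n 𝕜} (hM : M.PosSemidef) :
    0 ≤ toEuclideanCLM (n := n) (𝕜 := 𝕜) M := by
  rw [ContinuousLinearMap.nonneg_iff_isPositive, ← ContinuousLinearMap.isPositive_toLinearMap_iff,
    coe_toEuclideanCLM_eq_toEuclideanLin]
  exact isPositive_toEuclideanLin_iff.mpr hM

theorem norm_toEuclideanCLM_le_of_posSemidef {M N : Matrix n n 𝕜} (hM : M.PosSemidef)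
    (hMN : (N - M).PosSemidef) :
    ‖toEuclideanCLM (n := n) (𝕜 := 𝕜) M‖ ≤ ‖toEuclideanCLM (n := n) (𝕜 := 𝕜) N‖ := by
  refine ContinuousLinearMap.norm_le_norm_of_nonneg_of_le hM.toEuclideanCLM_nonneg ?_
  rw [ContinuousLinearMap.le_def, ← map_sub]
  exact (ContinuousLinearMap.nonneg_iff_isPositive _).mp hMN.toEuclideanCLM_nonneg

end Matrix

theorem symmetrized_solver_bounds_general {n : ℕ} (A B₁ : Matrix (Fin n) (Fin n) ℝ)
    (hB₁ : B₁.PosDef) (hge : (B₁ - A).PosSemidef) :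
    ((2 : ℝ) • B₁ - A).PosDef ∧
    spec ((2 : ℝ) • B₁ - A)⁻¹ ≤ spec B₁⁻¹ ∧
    (B₁ * ((2 : ℝ) • B₁ - A)⁻¹ * B₁ - A).PosSemidef ∧
    (B₁ - B₁ * ((2 : ℝ) • B₁ - A)⁻¹ * B₁).PosSemidef ∧
    spec (B₁ * ((2 : ℝ) • B₁ - A)⁻¹ * B₁) ≤ spec B₁ := by
  obtain ⟨D, rfl⟩ : ∃ D, A = B₁ - D := ⟨B₁ - A, (sub_sub_cancel B₁ A).symm⟩
  rw [sub_sub_cancel] at hge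
  have hC : (2 : ℝ) • B₁ - (B₁ - D) = B₁ + D := by module
  rw [hC]
  have hCpos := hB₁.add_posSemidef hge
  have hsolver_le := hB₁.posSemidef_sub_mul_inv_add_mul hge
  exact ⟨hCpos,
    norm_toEuclideanCLM_le_of_posSemidef hCpos.inv.posSemidef
      (hB₁.posSemidef_inv_sub_inv_add hge),
    hB₁.posSemidef_mul_inv_add_mul_sub_sub hge,
    hsolver_le,
    norm_toEuclideanCLM_le_of_posSemidef
      (hCpos.inv.posSemidef.mul_mul_of_isHermitian hB₁.isHermitian) hsolver_le⟩

theorem symmetrized_solver_bounds {n : ℕ} (A B₁ : Matrix (Fin n) (Fin n) ℝ)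
    (hA : A.PosDef) (hB₁ : B₁.PosDef) (hge : (B₁ - A).PosSemidef) :
    ((2 : ℝ) • B₁ - A).PosDef ∧
    spec ((2 : ℝ) • B₁ - A)⁻¹ ≤ spec B₁⁻¹ ∧
    (B₁ * ((2 : ℝ) • B₁ - A)⁻¹ * B₁ - A).PosSemidef ∧
    (B₁ - B₁ * ((2 : ℝ) • B₁ - A)⁻¹ * B₁).PosSemidef ∧
    spec (B₁ * ((2 : ℝ) • B₁ - A)⁻¹ * B₁) ≤ spec B₁ :=
  symmetrized_solver_bounds_general A B₁ hB₁ hge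
end
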